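/- Let F be a finite field and V an n-dimensional vector space over F with basis B, and let t = (|F|-1)^n. Then the neighborhood-quotient graph [UG(V)] of the nonzero component union graph is isomorphic to the graph join Γ((ℤ/2)^n) ∨ K_t, where (ℤ/2)^n is the product ring of n copies of the field with two elements. -/

import Mathlib

/-- The relation `u ≊ v` iff `N(u) = N(v)`; it is an equivalence relation. -/
def nbhdSetoid {α : Type*} (G : SimpleGraph α) : Setoid α where
  r u v := G.neighborSet u = G.neighborSet v
  iseqv := ⟨fun _ => rfl, Eq.symm, Eq.trans⟩

/-- The neighborhood-quotient graph `[G]`: vertices are the `≊`-classes, and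
distinct classes `[u]`, `[v]` are adjacent iff `u` and `v` are adjacent in `G`. -/
def nbhdQuotGraph {α : Type*} (G : SimpleGraph α) :
    SimpleGraph (Quotient (nbhdSetoid G)) where
  Adj x y := x ≠ y ∧ ∃ u v : α, Quotient.mk (nbhdSetoid G) u = x ∧
    Quotient.mk (nbhdSetoid G) v = y ∧ G.Adj u v
  symm := by
    constructor
    rintro x y ⟨hne, u, v, hu, hv, h⟩
    exact ⟨hne.symm, v, u, hv, hu, h.symm⟩
  loopless := ⟨fun x h => h.1 rfl⟩

/-- The skeleton (support) of a vector with respect to a basis. -/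
def skel {F V : Type*} [Field F] [AddCommGroup V] [Module F V] {n : ℕ}
    (B : Module.Basis (Fin n) F V) (a : V) : Set (Fin n) := {i | B.repr a i ≠ 0}

/-- The nonzero component union graph UG(V) with respect to a basis. -/
def compUnionGraph {F V : Type*} [Field F] [AddCommGroup V] [Module F V] {n : ℕ}
    (B : Module.Basis (Fin n) F V) : SimpleGraph {a : V // a ≠ 0} where
  Adj a b := a ≠ b ∧ skel B a.1 ∪ skel B b.1 = Set.univ
  symm := by
    constructor
    rintro a b ⟨hne, h⟩
    exact ⟨hne.symm, by rwa [Set.union_comm]⟩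
  loopless := ⟨fun a h => h.1 rfl⟩

/-- The join of two graphs: disjoint union together with all cross edges. -/
def graphJoin {α β : Type*} (G : SimpleGraph α) (H : SimpleGraph β) :
    SimpleGraph (α ⊕ β) where
  Adj x y :=
    match x, y with
    | Sum.inl a, Sum.inl b => G.Adj a b
    | Sum.inr a, Sum.inr b => H.Adj a b
    | _, _ => True
  symm := by
    constructor
    rintro (a|a) (b|b) h
    · exact h.symm
    · trivial
    · trivial
    · exact h.symm
  loopless := by
    constructor
    rintro (a|a) h
    · exact G.loopless.irrefl a h
    · exact H.loopless.irrefl a h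

/-- The zero-divisor graph of a commutative ring. -/
def ringZDG (R : Type*) [CommRing R] :
    SimpleGraph {x : R // x ≠ 0 ∧ ∃ y, y ≠ 0 ∧ x * y = 0} where
  Adj x y := x ≠ y ∧ x.1 * y.1 = 0
  symm := by
    constructor
    rintro x y ⟨h1, h2⟩
    exact ⟨h1.symm, by rwa [mul_comm]⟩
  loopless := ⟨fun x h => h.1 rfl⟩

set_option linter.unusedSectionVars false
open Classical Set Module

section helpers

variable {F V : Type*} [Field F] [AddCommGroup V] [Module F V] {n : ℕ} (B : Basis (Fin n) F V)

lemma skel_eq_empty_iff (a : V) : skel B a = ∅ ↔ a = 0 := by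
  constructor
  · intro h
    have h2 : B.repr a = 0 := by
      ext i
      have := Set.eq_empty_iff_forall_notMem.1 h i
      simpa [skel] using this
    simpa using congrArg B.repr.symm h2
  · rintro rfl; simp [skel, Set.eq_empty_iff_forall_notMem]

noncomputable def vecOf (A : Set (Fin n)) : V :=
  B.equivFun.symm (fun i => if i ∈ A then 1 else 0)

lemma skel_vecOf (A : Set (Fin n)) : skel B (vecOf B A) = A := by
  ext i
  simp only [skel, Set.mem_setOf_eq, ← Basis.equivFun_apply, vecOf,
    LinearEquiv.apply_symm_apply]
  split_ifs with h <;> simp [h]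

lemma vecOf_ne_zero {A : Set (Fin n)} (hA : A ≠ ∅) : vecOf B A ≠ 0 := by
  intro h
  exact hA (by rw [← skel_vecOf B A, h, skel_eq_empty_iff])

end helpers
section core
variable {F V : Type*} [Field F] [AddCommGroup V] [Module F V] {n : ℕ} (B : Basis (Fin n) F V)

lemma adj_iff (a b : {a : V // a ≠ 0}) :
    (compUnionGraph B).Adj a b ↔ a ≠ b ∧ skel B a.1 ∪ skel B b.1 = Set.univ := Iff.rfl

lemma skel_ne_empty (a : {a : V // a ≠ 0}) : skel B a.1 ≠ ∅ := by
  intro h; exact a.2 ((skel_eq_empty_iff B a.1).1 h)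

lemma adj_of_nonfull {a b : {a : V // a ≠ 0}} (ha : skel B a.1 ≠ Set.univ) :
    (compUnionGraph B).Adj a b ↔ skel B a.1 ∪ skel B b.1 = Set.univ := by
  rw [adj_iff]
  constructor
  · exact fun h => h.2
  · intro h
    refine ⟨?_, h⟩
    rintro rfl
    rw [Set.union_self] at h
    exact ha h

lemma mem_nbhd_nonfull {a b : {a : V // a ≠ 0}} (ha : skel B a.1 ≠ Set.univ) :
    b ∈ (compUnionGraph B).neighborSet a ↔ (skel B a.1)ᶜ ⊆ skel B b.1 := by
  rw [SimpleGraph.mem_neighborSet, adj_of_nonfull B ha, ← Set.compl_subset_iff_union]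

lemma compl_skel_ne_empty {a : {a : V // a ≠ 0}} (ha : skel B a.1 ≠ Set.univ) :
    (skel B a.1)ᶜ ≠ ∅ := by
  exact fun h2 => ha (Set.compl_empty_iff.1 h2)

lemma rel_iff (a b : {a : V // a ≠ 0}) :
    (nbhdSetoid (compUnionGraph B)).r a b ↔
      a = b ∨ (skel B a.1 ≠ Set.univ ∧ skel B a.1 = skel B b.1) := by
  constructor
  · intro h
    by_cases hab : a = b
    · exact Or.inl hab
    by_cases ha : skel B a.1 = Set.univ
    · exfalso
      have hb : b ∈ (compUnionGraph B).neighborSet a := by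
        rw [SimpleGraph.mem_neighborSet, adj_iff]
        exact ⟨hab, by rw [ha, Set.univ_union]⟩
      rw [show (nbhdSetoid (compUnionGraph B)).r a b from h] at hb
      exact (compUnionGraph B).irrefl hb
    by_cases hb : skel B b.1 = Set.univ
    · exfalso
      have hb' : a ∈ (compUnionGraph B).neighborSet b := by
        rw [SimpleGraph.mem_neighborSet, adj_iff]
        exact ⟨Ne.symm hab, by rw [hb, Set.univ_union]⟩
      rw [← show (nbhdSetoid (compUnionGraph B)).r a b from h] at hb'
      exact (compUnionGraph B).irrefl hb'
    · refine Or.inr ⟨ha, ?_⟩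
      have key : ∀ x y : {a : V // a ≠ 0},
          (nbhdSetoid (compUnionGraph B)).r x y → skel B x.1 ≠ Set.univ →
          skel B y.1 ≠ Set.univ → skel B x.1 ⊆ skel B y.1 := by
        intro x y hxy hx hy
        set c : {a : V // a ≠ 0} :=
          ⟨vecOf B (skel B x.1)ᶜ, vecOf_ne_zero B (compl_skel_ne_empty B hx)⟩ with hc
        have hcx : c ∈ (compUnionGraph B).neighborSet x := by
          rw [mem_nbhd_nonfull B hx]
          simp [hc, skel_vecOf]
        rw [show (nbhdSetoid (compUnionGraph B)).r x y from hxy] at hcx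
        rw [mem_nbhd_nonfull B hy] at hcx
        have : (skel B y.1)ᶜ ⊆ (skel B x.1)ᶜ := by
          simpa [hc, skel_vecOf] using hcx
        exact Set.compl_subset_compl.1 this
      exact Set.Subset.antisymm (key a b h ha hb)
        (key b a ((nbhdSetoid (compUnionGraph B)).iseqv.symm h) hb ha)
  · rintro (rfl | ⟨ha, he⟩)
    · exact (nbhdSetoid (compUnionGraph B)).iseqv.refl a
    · have hb : skel B b.1 ≠ Set.univ := he ▸ ha
      show (compUnionGraph B).neighborSet a = (compUnionGraph B).neighborSet b
      ext c
      rw [mem_nbhd_nonfull B ha, mem_nbhd_nonfull B hb, he]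

lemma rel_skel_eq {a b : {a : V // a ≠ 0}} (h : (nbhdSetoid (compUnionGraph B)).r a b) :
    skel B a.1 = skel B b.1 := by
  rcases (rel_iff B a b).1 h with rfl | ⟨_, he⟩
  · rfl
  · exact he
end core
section target
variable {n : ℕ}

noncomputable def xOf (A : Set (Fin n)) : Fin n → ZMod 2 :=
  fun i => if i ∈ A then 0 else 1

lemma zmod2_ne_zero {z : ZMod 2} (h : z ≠ 0) : z = 1 := by revert h; revert z; decide

lemma xOf_eq_zero_iff {A : Set (Fin n)} {i : Fin n} : xOf A i = 0 ↔ i ∈ A := by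
  unfold xOf; split_ifs with h <;> simp [h]

lemma xOf_injective : Function.Injective (xOf (n := n)) := by
  intro A A' h
  ext i
  rw [← xOf_eq_zero_iff (A := A), ← xOf_eq_zero_iff (A := A'), h]

lemma xOf_ne_zero {A : Set (Fin n)} (hA : A ≠ Set.univ) : xOf A ≠ 0 := by
  intro h
  apply hA
  rw [Set.eq_univ_iff_forall]
  intro i
  rw [← xOf_eq_zero_iff (A := A), h]
  rfl

lemma xOf_mul_eq_zero_iff {A A' : Set (Fin n)} :
    xOf A * xOf A' = 0 ↔ A ∪ A' = Set.univ := by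
  rw [funext_iff, Set.eq_univ_iff_forall]
  apply forall_congr'
  intro i
  rw [Pi.mul_apply, Pi.zero_apply, mul_eq_zero, xOf_eq_zero_iff, xOf_eq_zero_iff,
    Set.mem_union]

lemma xOf_mem_zd {A : Set (Fin n)} (h1 : A ≠ ∅) (h2 : A ≠ Set.univ) :
    xOf A ≠ 0 ∧ ∃ y, y ≠ 0 ∧ xOf A * y = 0 := by
  refine ⟨xOf_ne_zero h2, xOf Aᶜ, xOf_ne_zero ?_, ?_⟩
  · intro h
    exact h1 (by simpa using congrArg (·ᶜ) h)
  · rw [xOf_mul_eq_zero_iff, Set.union_compl_self]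

end target
section full
variable {F V : Type*} [Field F] [Fintype F] [AddCommGroup V] [Module F V] {n : ℕ}
  (B : Basis (Fin n) F V) (hn : 1 ≤ n)

noncomputable def fullType1 :
    {a : {a : V // a ≠ 0} // skel B a.1 = Set.univ} ≃ (Fin n → {c : F // c ≠ 0}) where
  toFun a := fun i => ⟨B.repr a.1.1 i, Set.eq_univ_iff_forall.1 a.2 i⟩
  invFun f := ⟨⟨B.equivFun.symm (fun i => (f i).1), by
      intro h
      have hs : skel B (B.equivFun.symm (fun i => (f i).1) : V) = Set.univ := by
        ext i
        simp only [skel, Set.mem_setOf_eq, ← Basis.equivFun_apply,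
          LinearEquiv.apply_symm_apply, Set.mem_univ, iff_true]
        exact (f i).2
      rw [h] at hs
      have h0 : (⟨0, hn⟩ : Fin n) ∈ skel B (0 : V) := hs ▸ Set.mem_univ _
      simp [skel] at h0⟩, by
      ext i
      simp only [skel, Set.mem_setOf_eq, ← Basis.equivFun_apply,
        LinearEquiv.apply_symm_apply, Set.mem_univ, iff_true]
      exact (f i).2⟩
  left_inv a := by
    apply Subtype.ext
    apply Subtype.ext
    show B.equivFun.symm (fun i => B.repr a.1.1 i) = a.1.1
    rw [show (fun i => B.repr a.1.1 i) = B.equivFun a.1.1 by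
      funext i; rw [Basis.equivFun_apply]]
    exact B.equivFun.symm_apply_apply _
  right_inv f := by
    funext i
    apply Subtype.ext
    show B.repr (B.equivFun.symm (fun i => (f i).1)) i = (f i).1
    rw [← Basis.equivFun_apply, LinearEquiv.apply_symm_apply]

lemma card_nonzero : Fintype.card {c : F // c ≠ 0} = Fintype.card F - 1 := by
  rw [Fintype.card_subtype_compl, Fintype.card_subtype_eq]

noncomputable def fullEquiv :
    {a : {a : V // a ≠ 0} // skel B a.1 = Set.univ} ≃ Fin ((Fintype.card F - 1) ^ n) :=
  (fullType1 B hn).trans (Fintype.equivFinOfCardEq (by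
    rw [Fintype.card_fun, card_nonzero, Fintype.card_fin]))

end full
section main
variable {F V : Type*} [Field F] [Fintype F] [AddCommGroup V] [Module F V] {n : ℕ}
  (B : Basis (Fin n) F V) (hn : 1 ≤ n)

noncomputable def toTarget (a : {a : V // a ≠ 0}) :
    {x : Fin n → ZMod 2 // x ≠ 0 ∧ ∃ y, y ≠ 0 ∧ x * y = 0} ⊕
      Fin ((Fintype.card F - 1) ^ n) :=
  if h : skel B a.1 = Set.univ then Sum.inr (fullEquiv B hn ⟨a, h⟩)
  else Sum.inl ⟨xOf (skel B a.1), xOf_mem_zd (skel_ne_empty B a) h⟩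

lemma toTarget_wd (a b : {a : V // a ≠ 0})
    (h : (nbhdSetoid (compUnionGraph B)).r a b) :
    toTarget B hn a = toTarget B hn b := by
  rcases (rel_iff B a b).1 h with rfl | ⟨ha, he⟩
  · rfl
  · have hb : skel B b.1 ≠ Set.univ := he ▸ ha
    rw [toTarget, toTarget, dif_neg ha, dif_neg hb]
    exact congrArg Sum.inl (Subtype.ext
      (show xOf (skel B a.1) = xOf (skel B b.1) by rw [he]))

noncomputable def toTargetQ :
    Quotient (nbhdSetoid (compUnionGraph B)) →
    {x : Fin n → ZMod 2 // x ≠ 0 ∧ ∃ y, y ≠ 0 ∧ x * y = 0} ⊕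
      Fin ((Fintype.card F - 1) ^ n) :=
  Quotient.lift (toTarget B hn) (toTarget_wd B hn)

lemma toTargetQ_bij : Function.Bijective (toTargetQ B hn) := by
  constructor
  · intro x y
    induction x using Quotient.ind with | _ u =>
    induction y using Quotient.ind with | _ v =>
    intro h
    simp only [toTargetQ, Quotient.lift_mk] at h
    refine Quotient.sound ((rel_iff B u v).2 ?_)
    by_cases hu : skel B u.1 = Set.univ <;> by_cases hv : skel B v.1 = Set.univ
    · rw [toTarget, toTarget, dif_pos hu, dif_pos hv] at h
      have h2 := (fullEquiv B hn).injective (Sum.inr.inj h)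
      exact Or.inl (Subtype.ext_iff.1 h2)
    · rw [toTarget, toTarget, dif_pos hu, dif_neg hv] at h; exact absurd h (by simp)
    · rw [toTarget, toTarget, dif_neg hu, dif_pos hv] at h; exact absurd h (by simp)
    · rw [toTarget, toTarget, dif_neg hu, dif_neg hv] at h
      have := xOf_injective (congrArg Subtype.val (Sum.inl.inj h))
      exact Or.inr ⟨hu, this⟩
  · rintro (⟨x, hx0, y, hy0, hxy⟩ | j)
    · set A : Set (Fin n) := {i | x i = 0} with hA
      have hAne : A ≠ ∅ := by
        obtain ⟨i, hi⟩ : ∃ i, y i ≠ 0 := by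
          by_contra h; push_neg at h; exact hy0 (funext fun i => h i)
        have : x i * y i = 0 := congrFun hxy i
        have hxi : x i = 0 := by
          rcases mul_eq_zero.1 this with h | h
          · exact h
          · exact absurd h hi
        intro h
        exact (Set.eq_empty_iff_forall_notMem.1 h i) hxi
      have hAnu : A ≠ Set.univ := by
        intro h
        exact hx0 (funext fun i => Set.eq_univ_iff_forall.1 h i)
      refine ⟨Quotient.mk _ ⟨vecOf B A, vecOf_ne_zero B hAne⟩, ?_⟩
      show toTarget B hn _ = _
      rw [toTarget]
      have hsk : skel B (vecOf B A) = A := skel_vecOf B A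
      rw [dif_neg (by rw [hsk]; exact hAnu)]
      congr 1
      apply Subtype.ext
      show xOf (skel B (vecOf B A)) = x
      rw [hsk]
      funext i
      by_cases hi : i ∈ A
      · rw [xOf_eq_zero_iff.2 hi]; exact (show x i = 0 from hi).symm
      · have hx1 : x i ≠ 0 := hi
        unfold xOf
        rw [if_neg hi, (zmod2_ne_zero hx1)]
    · refine ⟨Quotient.mk _ ((fullEquiv B hn).symm j).1, ?_⟩
      show toTarget B hn _ = _
      rw [toTarget, dif_pos ((fullEquiv B hn).symm j).2]
      congr 1
      rw [show (⟨((fullEquiv B hn).symm j).1, ((fullEquiv B hn).symm j).2⟩ :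
        {a : {a : V // a ≠ 0} // skel B a.1 = Set.univ}) = (fullEquiv B hn).symm j from rfl]
      exact (fullEquiv B hn).apply_symm_apply j

lemma quotAdj_iff (u v : {a : V // a ≠ 0}) :
    (nbhdQuotGraph (compUnionGraph B)).Adj
      (Quotient.mk (nbhdSetoid (compUnionGraph B)) u)
      (Quotient.mk (nbhdSetoid (compUnionGraph B)) v) ↔
      (Quotient.mk (nbhdSetoid (compUnionGraph B)) u ≠
        Quotient.mk (nbhdSetoid (compUnionGraph B)) v) ∧
      skel B u.1 ∪ skel B v.1 = Set.univ := by
  constructor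
  · rintro ⟨hne, u', v', hu', hv', hadj⟩
    refine ⟨hne, ?_⟩
    have h1 : skel B u'.1 = skel B u.1 := rel_skel_eq B (Quotient.exact hu')
    have h2 : skel B v'.1 = skel B v.1 := rel_skel_eq B (Quotient.exact hv')
    rw [← h1, ← h2]
    exact hadj.2
  · rintro ⟨hne, hU⟩
    exact ⟨hne, u, v, rfl, rfl, ⟨fun h => hne (by rw [h]), hU⟩⟩

end main
theorem stmt17' {F V : Type*} [Field F] [Fintype F] [AddCommGroup V] [Module F V]
    {n : ℕ} (hn : 1 ≤ n) (B : Basis (Fin n) F V) :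
    Nonempty (nbhdQuotGraph (compUnionGraph B) ≃g
      graphJoin (ringZDG (Fin n → ZMod 2))
        (⊤ : SimpleGraph (Fin ((Fintype.card F - 1) ^ n)))) := by
  refine ⟨⟨Equiv.ofBijective (toTargetQ B hn) (toTargetQ_bij B hn), ?_⟩⟩
  intro X Y
  induction X using Quotient.ind with | _ u =>
  induction Y using Quotient.ind with | _ v =>
  show (graphJoin _ _).Adj (toTarget B hn u) (toTarget B hn v) ↔ _
  rw [quotAdj_iff B]
  by_cases hu : skel B u.1 = Set.univ <;> by_cases hv : skel B v.1 = Set.univ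
  · rw [toTarget, toTarget, dif_pos hu, dif_pos hv]
    show fullEquiv B hn ⟨u, hu⟩ ≠ fullEquiv B hn ⟨v, hv⟩ ↔ _
    constructor
    · intro hij
      refine ⟨?_, by rw [hu, Set.univ_union]⟩
      intro hq
      rcases (rel_iff B u v).1 (Quotient.eq.1 hq) with rfl | ⟨h, _⟩
      · exact hij rfl
      · exact h hu
    · rintro ⟨hq, -⟩
      intro hij
      have : u = v := Subtype.ext_iff.1 ((fullEquiv B hn).injective hij)
      exact hq (by rw [this])
  · rw [toTarget, toTarget, dif_pos hu, dif_neg hv]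
    show True ↔ _
    rw [true_iff]
    refine ⟨?_, by rw [hu, Set.univ_union]⟩
    intro hq
    rcases (rel_iff B u v).1 (Quotient.eq.1 hq) with rfl | ⟨_, he⟩
    · exact hv hu
    · exact hv (he ▸ hu)
  · rw [toTarget, toTarget, dif_neg hu, dif_pos hv]
    show True ↔ _
    rw [true_iff]
    refine ⟨?_, by rw [hv, Set.union_univ]⟩
    intro hq
    rcases (rel_iff B u v).1 (Quotient.eq.1 hq) with rfl | ⟨_, he⟩
    · exact hu hv
    · exact hu (he ▸ hv)
  · rw [toTarget, toTarget, dif_neg hu, dif_neg hv]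
    show (ringZDG _).Adj ⟨xOf (skel B u.1), _⟩ ⟨xOf (skel B v.1), _⟩ ↔ _
    show (_ ≠ _ ∧ xOf (skel B u.1) * xOf (skel B v.1) = 0) ↔ _
    rw [xOf_mul_eq_zero_iff]
    apply and_congr_left'
    rw [Ne, Ne, Subtype.ext_iff]
    constructor
    · intro hx hq
      rcases (rel_iff B u v).1 (Quotient.eq.1 hq) with rfl | ⟨_, he⟩
      · exact hx rfl
      · exact hx (show xOf (skel B u.1) = xOf (skel B v.1) by rw [he])
    · intro hq hx
      have he : skel B u.1 = skel B v.1 := xOf_injective hx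
      exact hq (Quotient.sound ((rel_iff B u v).2 (Or.inr ⟨hu, he⟩)))
/-- For a finite field `F`, an `n`-dimensional `F`-vector space `V`
with basis `B`, and `t = (|F|-1)^n`, the neighborhood-quotient graph `[UG(V)]` is
isomorphic to the join `Γ((ℤ/2)ⁿ) ∨ K_t`. -/
theorem stmt17 {F V : Type*} [Field F] [Fintype F] [AddCommGroup V] [Module F V]
    {n : ℕ} (hn : 1 ≤ n) (B : Basis (Fin n) F V) :
    Nonempty (nbhdQuotGraph (compUnionGraph B) ≃g
      graphJoin (ringZDG (Fin n → ZMod 2))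
        (⊤ : SimpleGraph (Fin ((Fintype.card F - 1) ^ n)))) := by
  exact stmt17' hn B
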